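/- arXiv:2511.08515 — 5 statements merged into one kernel-verified Lean document; each statement's English description precedes it below -/
import Mathlib

section
/- For relational structures A and B in a common signature, there is a surjective full homomorphism from A to B if and only if A is isomorphic to a blow-up of B. -/
/-- A full homomorphism between relational structures: it preserves each relation
and its complement. -/
def FullHom {σ : Type} {ar : σ → ℕ} {A B : Type}
    (RA : ∀ s : σ, (Fin (ar s) → A) → Prop)
    (RB : ∀ s : σ, (Fin (ar s) → B) → Prop) (f : A → B) : Prop :=
  ∀ (s : σ) (t : Fin (ar s) → A), RA s t ↔ RB s (f ∘ t)

/-- A homomorphism between relational structures. -/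
def StrHom {σ : Type} {ar : σ → ℕ} {A B : Type}
    (RA : ∀ s : σ, (Fin (ar s) → A) → Prop)
    (RB : ∀ s : σ, (Fin (ar s) → B) → Prop) (f : A → B) : Prop :=
  ∀ (s : σ) (t : Fin (ar s) → A), RA s t → RB s (f ∘ t)

/-- Two elements are interchangeable if replacing one by the other in any coordinate of
any tuple preserves membership in every relation. -/
def Interchangeable {σ : Type} {ar : σ → ℕ} {A : Type}
    (RA : ∀ s : σ, (Fin (ar s) → A) → Prop) (a b : A) : Prop :=
  ∀ (s : σ) (t : Fin (ar s) → A) (i : Fin (ar s)),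
    RA s (Function.update t i a) ↔ RA s (Function.update t i b)

/-- Twins: distinct interchangeable elements. -/
def Twins {σ : Type} {ar : σ → ℕ} {A : Type}
    (RA : ∀ s : σ, (Fin (ar s) → A) → Prop) (a b : A) : Prop :=
  a ≠ b ∧ Interchangeable RA a b

/-- A structure is point-determining if it contains no twins. -/
def PointDetermining {σ : Type} {ar : σ → ℕ} {A : Type}
    (RA : ∀ s : σ, (Fin (ar s) → A) → Prop) : Prop :=
  ∀ a b : A, ¬ Twins RA a b

/-- `(C, RC)` is a blow-up of `(B, RB)`: it contains an induced copy of `B` such that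
every element outside the copy has a twin inside the copy. -/
def IsBlowUpOf {σ : Type} {ar : σ → ℕ} {C B : Type}
    (RC : ∀ s : σ, (Fin (ar s) → C) → Prop)
    (RB : ∀ s : σ, (Fin (ar s) → B) → Prop) : Prop :=
  ∃ e : B → C, Function.Injective e ∧ FullHom RB RC e ∧
    ∀ c : C, c ∉ Set.range e → ∃ b : B, Twins RC c (e b)

/-- `(F, RF)` embeds into `(A, RA)`: there is an injective full homomorphism. -/
def Embeds {σ : Type} {ar : σ → ℕ} {F A : Type}
    (RF : ∀ s : σ, (Fin (ar s) → F) → Prop)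
    (RA : ∀ s : σ, (Fin (ar s) → A) → Prop) : Prop :=
  ∃ e : F → A, Function.Injective e ∧ FullHom RF RA e

/-- If each coordinate value of `u` is interchangeable with the corresponding value of `v`
(for relation `s`), then `u` and `v` are simultaneously in the relation. -/
lemma interchange_tuple {σ : Type} {ar : σ → ℕ} {C : Type}
    (RC : ∀ s : σ, (Fin (ar s) → C) → Prop) (s : σ)
    (u v : Fin (ar s) → C)
    (h : ∀ i t, RC s (Function.update t i (u i)) ↔ RC s (Function.update t i (v i))) :
    RC s u ↔ RC s v := by
  classical
  have key : ∀ fs : Finset (Fin (ar s)),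
      RC s u ↔ RC s (fun i => if i ∈ fs then v i else u i) := by
    intro fs
    induction fs using Finset.induction_on with
    | empty => simp
    | @insert j fs hj ih =>
      set base : Fin (ar s) → C := fun i => if i ∈ fs then v i else u i with hbase
      have h1 : (fun i => if i ∈ insert j fs then v i else u i)
          = Function.update base j (v j) := by
        funext i
        by_cases hij : i = j
        · subst hij; simp [Function.update, base]
        · simp [Function.update, hij, base, Finset.mem_insert]
      have h2 : base = Function.update base j (u j) := by
        funext i
        by_cases hij : i = j
        · subst hij; simp [Function.update, base, hj]
        · simp [Function.update, hij]
      rw [h1]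
      calc RC s u ↔ RC s base := ih
        _ ↔ RC s (Function.update base j (u j)) := by rw [← h2]
        _ ↔ RC s (Function.update base j (v j)) := h j base
  simpa using key Finset.univ

/-- For relational structures `A` and `B` in a common signature, there is a
surjective full homomorphism from `A` to `B` if and only if `A` is isomorphic to a
blow-up of `B`. -/
theorem stmt_2 {σ : Type} {ar : σ → ℕ} {A B : Type}
    (RA : ∀ s : σ, (Fin (ar s) → A) → Prop)
    (RB : ∀ s : σ, (Fin (ar s) → B) → Prop) :
    (∃ f : A → B, Function.Surjective f ∧ FullHom RA RB f) ↔
      ∃ (C : Type) (RC : ∀ s : σ, (Fin (ar s) → C) → Prop) (g : A ≃ C),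
        FullHom RA RC g ∧ IsBlowUpOf RC RB := by
  classical
  constructor
  · rintro ⟨f, hsurj, hfull⟩
    refine ⟨A, RA, Equiv.refl A, ?_, ?_⟩
    · intro s t
      rfl
    · -- section of f
      choose e he using hsurj
      refine ⟨e, ?_, ?_, ?_⟩
      · intro b1 b2 h
        have := congrArg f h
        rwa [he, he] at this
      · intro s t
        rw [hfull]
        have : f ∘ e ∘ t = t := by funext i; simp [he]
        rw [this]
      · intro c hc
        refine ⟨f c, ?_, ?_⟩
        · intro heq
          exact hc ⟨f c, heq.symm⟩
        · intro s t i
          rw [hfull, hfull]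
          have : f ∘ Function.update t i c = f ∘ Function.update t i (e (f c)) := by
            funext j
            by_cases hij : j = i
            · subst hij; simp [he]
            · simp [Function.update, hij]
          rw [this]
  · rintro ⟨C, RC, g, hg, e, hinj, hefull, htwin⟩
    let h : C → B := fun c =>
      if hc : c ∈ Set.range e then hc.choose else (htwin c hc).choose
    have hrange : ∀ b : B, h (e b) = b := by
      intro b
      have hc : e b ∈ Set.range e := ⟨b, rfl⟩
      have : e (h (e b)) = e b := by
        simp only [h, dif_pos hc]
        exact hc.choose_spec
      exact hinj this
    have hint : ∀ c : C, Interchangeable RC c (e (h c)) := by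
      intro c
      by_cases hc : c ∈ Set.range e
      · have : e (h c) = c := by
          simp only [h, dif_pos hc]
          exact hc.choose_spec
        rw [this]
        exact fun s t i => Iff.rfl
      · have : Twins RC c (e (h c)) := by
          simp only [h, dif_neg hc]
          exact ⟨(htwin c hc).choose_spec.1, (htwin c hc).choose_spec.2⟩
        exact this.2
    refine ⟨h ∘ g, ?_, ?_⟩
    · intro b
      refine ⟨g.symm (e b), ?_⟩
      simp [hrange]
    · intro s t
      rw [hg]
      have step : RC s (fun i => g (t i)) ↔ RC s (fun i => e (h (g (t i)))) :=
        interchange_tuple RC s _ _ (fun i t' => hint (g (t i)) s t' i)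
      have := hefull s (fun i => h (g (t i)))
      constructor
      · intro hr
        exact this.mpr (step.mp hr)
      · intro hr
        exact step.mpr (this.mp hr)
end

section
/- Every finite relational structure B admits a full surjective homomorphism onto a point-determining structure B_0 that embeds into B, and B_0 is unique up to isomorphism; moreover B is isomorphic to a blow-up of B_0. -/
section Aux
variable {σ : Type} {ar : σ → ℕ} {A : Type}

lemma inter_refl (RA : ∀ s : σ, (Fin (ar s) → A) → Prop) (a : A) :
    Interchangeable RA a a := fun _ _ _ => Iff.rfl

lemma inter_symm (RA : ∀ s : σ, (Fin (ar s) → A) → Prop) {a b : A}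
    (h : Interchangeable RA a b) : Interchangeable RA b a :=
  fun s t i => (h s t i).symm

lemma inter_trans (RA : ∀ s : σ, (Fin (ar s) → A) → Prop) {a b c : A}
    (h : Interchangeable RA a b) (h' : Interchangeable RA b c) :
    Interchangeable RA a c := fun s t i => (h s t i).trans (h' s t i)

lemma interchange_tuple_s3 (RA : ∀ s : σ, (Fin (ar s) → A) → Prop) (s : σ) :
    ∀ (S : Finset (Fin (ar s))) (t t' : Fin (ar s) → A),
      (∀ i, Interchangeable RA (t i) (t' i)) →
      (∀ i ∉ S, t i = t' i) → (RA s t ↔ RA s t') := by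
  intro S
  induction S using Finset.induction with
  | empty =>
    intro t t' _ h2
    rw [funext fun i => h2 i (by simp)]
  | @insert i S hni ih =>
    intro t t' h1 h2
    have step : RA s t ↔ RA s (Function.update t i (t' i)) := by
      conv_lhs => rw [← Function.update_eq_self i t]
      exact h1 i s t i
    rw [step]
    apply ih
    · intro j
      by_cases hj : j = i
      · subst hj; rw [Function.update_self]; exact inter_refl RA _
      · rw [Function.update_of_ne hj]; exact h1 j
    · intro j hjS
      by_cases hj : j = i
      · subst hj; rw [Function.update_self]
      · rw [Function.update_of_ne hj]
        exact h2 j (by simp [hj, hjS])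

lemma interchange_all (RA : ∀ s : σ, (Fin (ar s) → A) → Prop) (s : σ)
    (t t' : Fin (ar s) → A)
    (h : ∀ i, Interchangeable RA (t i) (t' i)) : RA s t ↔ RA s t' :=
  interchange_tuple_s3 RA s Finset.univ t t' h (fun i hi => absurd (Finset.mem_univ i) hi)

/-- The interchangeability setoid. -/
def interSetoid (RA : ∀ s : σ, (Fin (ar s) → A) → Prop) : Setoid A :=
  ⟨Interchangeable RA, fun a => inter_refl RA a, inter_symm RA, inter_trans RA⟩

end Aux

/-- Every finite relational structure `B` admits a full surjective
homomorphism onto a point-determining structure `B₀` that embeds into `B`; `B` is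
isomorphic to a blow-up of `B₀`; and `B₀` is unique up to isomorphism among
point-determining full surjective images of `B`. -/
theorem stmt_3 {σ : Type} {ar : σ → ℕ} {B : Type} [Fintype B]
    (RB : ∀ s : σ, (Fin (ar s) → B) → Prop) :
    ∃ (B0 : Type) (R0 : ∀ s : σ, (Fin (ar s) → B0) → Prop) (f : B → B0),
      Function.Surjective f ∧ FullHom RB R0 f ∧ PointDetermining R0 ∧
      (∃ e : B0 → B, Function.Injective e ∧ FullHom R0 RB e) ∧
      IsBlowUpOf RB R0 ∧
      ∀ (B1 : Type) (R1 : ∀ s : σ, (Fin (ar s) → B1) → Prop) (f1 : B → B1),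
        Function.Surjective f1 → FullHom RB R1 f1 → PointDetermining R1 →
          ∃ g : B0 ≃ B1, FullHom R0 R1 g := by
  classical
  letI st : Setoid B := interSetoid RB
  set B0 := Quotient st with hB0
  set R0 : ∀ s : σ, (Fin (ar s) → B0) → Prop :=
    fun s t => RB s (fun i => (t i).out) with hR0
  have hout : ∀ b : B, Interchangeable RB ((⟦b⟧ : B0).out) b :=
    fun b => Quotient.mk_out b
  have hfull : FullHom RB R0 (Quotient.mk st) := by
    intro s t
    exact interchange_all RB s t (fun i => (⟦t i⟧ : B0).out)
      (fun i => inter_symm RB (hout (t i)))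
  have hefull : FullHom R0 RB (Quotient.out : B0 → B) := fun s t => Iff.rfl
  have heinj : Function.Injective (Quotient.out : B0 → B) :=
    fun a b h => by rw [← Quotient.out_eq a, ← Quotient.out_eq b, h]
  refine ⟨B0, R0, Quotient.mk st, (fun b => ⟨Quotient.out b, Quotient.out_eq b⟩), hfull, ?_, ?_, ?_, ?_⟩
  · -- point-determining
    rintro a b ⟨hne, hint⟩
    refine hne ?_
    induction a using Quotient.inductionOn with | _ a =>
    induction b using Quotient.inductionOn with | _ b =>
    refine Quotient.sound ?_
    intro s t i
    have key := hint s (fun j => ⟦t j⟧) i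
    have lhs : R0 s (Function.update (fun j => (⟦t j⟧ : B0)) i ⟦a⟧) ↔
        RB s (Function.update t i a) := by
      refine interchange_all RB s _ _ ?_
      intro j
      by_cases hj : j = i
      · subst hj; simp only [Function.update_self]; exact hout a
      · simp only [Function.update_of_ne hj]; exact hout (t j)
    have rhs : R0 s (Function.update (fun j => (⟦t j⟧ : B0)) i ⟦b⟧) ↔
        RB s (Function.update t i b) := by
      refine interchange_all RB s _ _ ?_
      intro j
      by_cases hj : j = i
      · subst hj; simp only [Function.update_self]; exact hout b
      · simp only [Function.update_of_ne hj]; exact hout (t j)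
    exact lhs.symm.trans (key.trans rhs)
  · exact ⟨Quotient.out, heinj, hefull⟩
  · -- blow-up
    refine ⟨Quotient.out, heinj, hefull, ?_⟩
    intro c hc
    refine ⟨⟦c⟧, ?_, inter_symm RB (hout c)⟩
    intro hceq
    exact hc ⟨⟦c⟧, hceq.symm⟩
  · -- uniqueness
    intro B1 R1 f1 hsurj hf1 hpd
    have resp : ∀ a b : B, Interchangeable RB a b → f1 a = f1 b := by
      intro a b hab
      by_contra hne
      refine hpd (f1 a) (f1 b) ⟨hne, ?_⟩
      intro s t i
      choose pre hpre using hsurj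
      have ht : t = f1 ∘ fun j => pre (t j) := by
        funext j; simp [hpre]
      have comp : ∀ x : B, Function.update t i (f1 x) =
          f1 ∘ Function.update (fun j => pre (t j)) i x := by
        intro x
        funext j
        by_cases hj : j = i
        · subst hj; simp
        · simp only [Function.update_of_ne hj, Function.comp_apply, hpre]
      rw [comp a, comp b, ← hf1 s _, ← hf1 s _]
      exact hab s _ i
    set g : B0 → B1 := Quotient.lift f1 resp with hg
    have hgbij : Function.Bijective g := by
      constructor
      · intro a b h
        induction a using Quotient.inductionOn with | _ a =>
        induction b using Quotient.inductionOn with | _ b =>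
        refine Quotient.sound ?_
        have h' : f1 a = f1 b := h
        intro s t i
        have := hf1 s (Function.update t i a)
        rw [hf1 s (Function.update t i a), hf1 s (Function.update t i b)]
        have heq : f1 ∘ Function.update t i a = f1 ∘ Function.update t i b := by
          funext j
          by_cases hj : j = i
          · subst hj; simp [h']
          · simp [Function.update_of_ne hj]
        rw [heq]
      · intro b1
        obtain ⟨b, hb⟩ := hsurj b1
        exact ⟨⟦b⟧, hb⟩
    refine ⟨Equiv.ofBijective g hgbij, ?_⟩
    intro s t
    have : (⇑(Equiv.ofBijective g hgbij)) ∘ t = f1 ∘ fun i => (t i).out := by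
      funext i
      show g (t i) = f1 (t i).out
      conv_lhs => rw [← Quotient.out_eq (t i)]
      rfl
    rw [this]
    exact hf1 s (fun i => (t i).out)
end

section
/- Let B be a finite relational structure over a finite signature. Then the class of finite structures admitting a full homomorphism to B is finitely bounded, i.e., there exists a finite set F of finite structures such that a finite structure A admits a full homomorphism to B if and only if no member of F embeds into A. -/
def comapRel {σ : Type} {ar : σ → ℕ} {A C : Type} (f : C → A)
    (RA : ∀ s : σ, (Fin (ar s) → A) → Prop) : ∀ s : σ, (Fin (ar s) → C) → Prop :=
  fun s u => RA s (f ∘ u)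

namespace FullHom

variable {σ : Type} {ar : σ → ℕ} {A B C : Type}

theorem of_comapRel (f : C → A) (RA : ∀ s : σ, (Fin (ar s) → A) → Prop) :
    FullHom (comapRel f RA) RA f :=
  fun _ _ => Iff.rfl

theorem to_comapRel_symm (e : C ≃ A) (RC : ∀ s : σ, (Fin (ar s) → C) → Prop) :
    FullHom RC (comapRel e.symm RC) e := by
  intro s t
  simp only [comapRel, ← Function.comp_assoc, Equiv.symm_comp_self, Function.id_comp]

theorem comp {RA : ∀ s : σ, (Fin (ar s) → A) → Prop} {RB : ∀ s : σ, (Fin (ar s) → B) → Prop}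
    {RC : ∀ s : σ, (Fin (ar s) → C) → Prop} {f : A → B} {g : B → C}
    (hf : FullHom RA RB f) (hg : FullHom RB RC g) : FullHom RA RC (g ∘ f) :=
  fun s t => (hf s t).trans (hg s (f ∘ t))

theorem interchangeable_of_eq {RA : ∀ s : σ, (Fin (ar s) → A) → Prop}
    {RB : ∀ s : σ, (Fin (ar s) → B) → Prop} {f : A → B} (hf : FullHom RA RB f) {a b : A}
    (hab : f a = f b) : Interchangeable RA a b := by
  intro s t i
  rw [hf s, hf s, Function.comp_update, Function.comp_update, hab]

end FullHom

namespace Interchangeable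

variable {σ : Type} {ar : σ → ℕ} {A : Type} {RA : ∀ s : σ, (Fin (ar s) → A) → Prop}

variable (RA) in
def setoid : Setoid A where
  r := Interchangeable RA
  iseqv :=
    { refl := fun _ _ _ _ => Iff.rfl
      symm := fun h s t i => (h s t i).symm
      trans := fun h₁ h₂ s t i => (h₁ s t i).trans (h₂ s t i) }

theorem rel_iff {s : σ} {t t' : Fin (ar s) → A} (h : ∀ i, Interchangeable RA (t i) (t' i)) :
    RA s t ↔ RA s t' := by
  classical
  suffices key : ∀ I : Finset (Fin (ar s)), RA s t ↔ RA s (fun i => if i ∈ I then t' i else t i) by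
    simpa using key Finset.univ
  intro I
  induction I using Finset.induction_on with
  | empty => simp
  | insert j I hj ih =>
    set u : Fin (ar s) → A := fun i => if i ∈ I then t' i else t i
    have hu : u = Function.update u j (t j) := by
      ext i
      rcases eq_or_ne i j with rfl | hij
      · simp [u, hj]
      · simp [u, hij]
    have hu' : (fun i => if i ∈ insert j I then t' i else t i) = Function.update u j (t' j) := by
      ext i
      rcases eq_or_ne i j with rfl | hij
      · simp
      · simp [u, hij]
    rw [ih, hu', ← h j s u j, ← hu]

end Interchangeable

section Obstruction

variable {σ : Type} {ar : σ → ℕ} {A B : Type} {RA : ∀ s : σ, (Fin (ar s) → A) → Prop}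
  {RB : ∀ s : σ, (Fin (ar s) → B) → Prop}

/-- Non-interchangeability is witnessed by a single tuple, so it survives in every induced
substructure containing the entries of that tuple. -/
theorem exists_finset_not_interchangeable_comapRel [Fintype σ] {a b : A}
    (h : ¬ Interchangeable RA a b) :
    ∃ T : Finset A, T.card ≤ Finset.univ.sup ar ∧
      ∀ (S : Finset A) (ha : a ∈ S) (hb : b ∈ S), T ⊆ S →
        ¬ Interchangeable (comapRel Subtype.val RA) (⟨a, ha⟩ : S) ⟨b, hb⟩ := by
  classical
  simp only [Interchangeable, not_forall] at h
  obtain ⟨s, t, i, hsti⟩ := h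
  refine ⟨Finset.univ.image t, ?_, fun S ha hb hTS hS => hsti ?_⟩
  · calc (Finset.univ.image t).card ≤ ar s := by
          simpa using Finset.card_image_le (s := Finset.univ) (f := t)
      _ ≤ Finset.univ.sup ar := Finset.le_sup (Finset.mem_univ s)
  · let u : Fin (ar s) → S := fun j => ⟨t j, hTS (Finset.mem_image_of_mem t (Finset.mem_univ j))⟩
    have hu := hS s u i
    simp only [comapRel, Function.comp_update] at hu
    exact hu

theorem exists_finset_transversal [Fintype A] :
    ∃ R : Finset A, (R : Set A).Pairwise (fun a b => ¬ Interchangeable RA a b) ∧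
      ∀ a, ∃ b ∈ R, Interchangeable RA a b := by
  classical
  let rep : A → A := fun a => (Quotient.mk (Interchangeable.setoid RA) a).out
  refine ⟨Finset.univ.image rep, ?_, fun a => ⟨rep a, by simp, ?_⟩⟩
  · simp only [Finset.coe_image, Finset.coe_univ, Set.image_univ]
    rintro _ ⟨a, rfl⟩ _ ⟨b, rfl⟩ hne hab
    exact hne (congrArg Quotient.out (Quotient.out_equiv_out.mp hab))
  · exact Setoid.symm' _ (Quotient.mk_out (s := Interchangeable.setoid RA) a)

theorem exists_fullHom_of_transversal {S : Finset A} (hS : ∀ a, ∃ b ∈ S, Interchangeable RA a b)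
    {g : S → B} (hg : FullHom (comapRel Subtype.val RA) RB g) : ∃ f : A → B, FullHom RA RB f := by
  choose r hrS hr using hS
  refine ⟨fun a => g ⟨r a, hrS a⟩, fun s t => ?_⟩
  exact (Interchangeable.rel_iff fun i => hr (t i)).trans (hg s fun i => ⟨r (t i), hrS (t i)⟩)

theorem exists_small_obstruction_of_pairwise [Fintype σ] [Fintype B] {R : Finset A}
    (hR : (R : Set A).Pairwise (fun a b => ¬ Interchangeable RA a b))
    (hcard : Fintype.card B < R.card) :
    ∃ S : Finset A, S.card ≤ R.card + R.card * R.card * Finset.univ.sup ar ∧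
      ¬ ∃ g : S → B, FullHom (comapRel Subtype.val RA) RB g := by
  classical
  have hwit : ∀ a b, ∃ T : Finset A, T.card ≤ Finset.univ.sup ar ∧
      (¬ Interchangeable RA a b → ∀ (S : Finset A) (ha : a ∈ S) (hb : b ∈ S), T ⊆ S →
        ¬ Interchangeable (comapRel Subtype.val RA) (⟨a, ha⟩ : S) ⟨b, hb⟩) := by
    intro a b
    by_cases hab : Interchangeable RA a b
    · exact ⟨∅, by simp, fun h => absurd hab h⟩
    · obtain ⟨T, hT, hTS⟩ := exists_finset_not_interchangeable_comapRel hab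
      exact ⟨T, hT, fun _ => hTS⟩
  choose T hTcard hT using hwit
  let W := (R ×ˢ R).biUnion fun p => T p.1 p.2
  refine ⟨R ∪ W, ?_, ?_⟩
  · have hW : W.card ≤ R.card * R.card * Finset.univ.sup ar := by
      calc W.card ≤ ∑ p ∈ R ×ˢ R, (T p.1 p.2).card := Finset.card_biUnion_le
        _ ≤ (R ×ˢ R).card • Finset.univ.sup ar :=
          Finset.sum_le_card_nsmul _ _ _ fun p _ => hTcard p.1 p.2
        _ = R.card * R.card * Finset.univ.sup ar := by rw [Finset.card_product, smul_eq_mul]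
    exact (Finset.card_union_le R W).trans (by omega)
  · rintro ⟨g, hg⟩
    have hRS : R ⊆ R ∪ W := Finset.subset_union_left
    obtain ⟨a, b, hab, hgab⟩ := Fintype.exists_ne_map_eq_of_card_lt
      (fun a : R => g ⟨a, hRS a.2⟩) (by simpa using hcard)
    refine hT a b (hR a.2 b.2 (Subtype.coe_ne_coe.mpr hab)) (R ∪ W) _ _ ?_
      (hg.interchangeable_of_eq hgab)
    exact fun x hx => Finset.mem_union_right R
      (Finset.mem_biUnion.mpr ⟨(a, b), Finset.mem_product.mpr ⟨a.2, b.2⟩, hx⟩)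

variable (B ar) in
/-- A finite structure without full homomorphism to `B` contains one of at most this size:
`|B| + 1` pairwise non-interchangeable elements together with a witness tuple for each pair. -/
def obstructionBound [Fintype σ] [Fintype B] : ℕ :=
  (Fintype.card B + 1) + (Fintype.card B + 1) * (Fintype.card B + 1) * Finset.univ.sup ar

theorem exists_small_obstruction [Fintype σ] [Fintype A] [Fintype B]
    (h : ¬ ∃ f : A → B, FullHom RA RB f) :
    ∃ S : Finset A, S.card ≤ obstructionBound ar B ∧
      ¬ ∃ g : S → B, FullHom (comapRel Subtype.val RA) RB g := by
  obtain ⟨R, hR, hRA⟩ := exists_finset_transversal (RA := RA)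
  by_cases hcard : R.card ≤ Fintype.card B
  · refine ⟨R, ?_, fun ⟨g, hg⟩ => h (exists_fullHom_of_transversal hRA hg)⟩
    unfold obstructionBound
    omega
  · obtain ⟨R', hR'R, hR'⟩ := Finset.exists_subset_card_eq (s := R) (n := Fintype.card B + 1)
      (by omega)
    obtain ⟨S, hS, hSB⟩ :=
      exists_small_obstruction_of_pairwise (RB := RB) (hR.mono hR'R) (by omega)
    exact ⟨S, by rwa [hR'] at hS, hSB⟩

theorem exists_fin_obstruction [Fintype σ] [Fintype A] [Fintype B]
    (h : ¬ ∃ f : A → B, FullHom RA RB f) :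
    ∃ k ≤ obstructionBound ar B, ∃ R : ∀ s : σ, (Fin (ar s) → Fin k) → Prop,
      (¬ ∃ f : Fin k → B, FullHom R RB f) ∧ Embeds R RA := by
  obtain ⟨S, hS, hSB⟩ := exists_small_obstruction h
  let e := S.equivFin
  refine ⟨S.card, hS, comapRel (Subtype.val ∘ e.symm) RA, fun ⟨f, hf⟩ => hSB ?_,
    Subtype.val ∘ e.symm, Subtype.val_injective.comp e.symm.injective, FullHom.of_comapRel _ _⟩
  exact ⟨f ∘ e, (FullHom.to_comapRel_symm e (comapRel Subtype.val RA)).comp hf⟩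

end Obstruction

/-- For every finite relational structure `B` over a finite signature, the
class of finite structures admitting a full homomorphism to `B` is finitely bounded:
there is a finite set `F` of finite structures such that a finite structure `A` admits a
full homomorphism to `B` if and only if no member of `F` embeds into `A`. -/
theorem stmt_6 {σ : Type} {ar : σ → ℕ} [Fintype σ] {B : Type} [Fintype B]
    (RB : ∀ s : σ, (Fin (ar s) → B) → Prop) :
    ∃ (m : ℕ) (sz : Fin m → ℕ)
      (FR : ∀ k : Fin m, ∀ s : σ, (Fin (ar s) → Fin (sz k)) → Prop),
      ∀ (A : Type), Fintype A → ∀ (RA : ∀ s : σ, (Fin (ar s) → A) → Prop),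
        ((∃ f : A → B, FullHom RA RB f) ↔ ∀ k : Fin m, ¬ Embeds (FR k) RA) := by
  classical
  let Obstruction := (k : Fin (obstructionBound ar B + 1)) ×
    {R : ∀ s : σ, (Fin (ar s) → Fin k) → Prop // ¬ ∃ f : Fin k → B, FullHom R RB f}
  let E := Fintype.equivFin Obstruction
  refine ⟨Fintype.card Obstruction, fun j => (E.symm j).1, fun j => (E.symm j).2.1, ?_⟩
  intro A _ RA
  constructor
  · rintro ⟨f, hf⟩ j ⟨e, -, he⟩
    exact (E.symm j).2.2 ⟨f ∘ e, he.comp hf⟩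
  · intro hforb
    by_contra h
    obtain ⟨k, hk, R, hR, hRA⟩ := exists_fin_obstruction h
    have hR_forbidden := hforb (E ⟨⟨k, Nat.lt_succ_of_le hk⟩, R, hR⟩)
    beta_reduce at hR_forbidden
    rw [Equiv.symm_apply_apply] at hR_forbidden
    exact hR_forbidden hRA
end

section
/- For every finite set B of finite relational structures over a finite signature, there exists a finite set A of finite structures such that a finite structure C admits a full homomorphism to some member of B if and only if no member of A admits a full homomorphism into C. -/
/-! Let `N` bound the sizes of the members of `𝓑` and `r` the arities, and take for `𝓐` all
structures of size at most `(N + 1) + (N + 1)² r` with no full homomorphism to a member of `𝓑`.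
Any map `g` into `C` is a full homomorphism from the pull-back of `C` along `g`, so when `C` has no
full homomorphism to `𝓑` it suffices to find a small such pull-back without one either.
A full homomorphism identifies only interchangeable elements. If `C` has at most `N`
interchangeability classes, `C` maps fully onto the pull-back to a set of representatives.
Otherwise pick `N + 1` pairwise non-interchangeable elements and, for each pair, a tuple
witnessing the difference: by pigeonhole a map of this piece into a member of `𝓑` identifies
two of the elements, which the witness forbids for a full homomorphism. -/

abbrev RelStr {σ : Type} (ar : σ → ℕ) (D : Type) : Type :=
  ∀ s : σ, (Fin (ar s) → D) → Prop

section

variable {σ : Type} {ar : σ → ℕ}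

def RelStr.comap {D C : Type} (g : D → C) (R : RelStr ar C) : RelStr ar D :=
  fun s t => R s (g ∘ t)

theorem fullHom_comap {D C : Type} (g : D → C) (R : RelStr ar C) :
    FullHom (R.comap g) R g :=
  fun _ _ => Iff.rfl

theorem fullHom_comap_of_comp_eq {D D' C : Type} {R : RelStr ar C} {g : D → C} {g' : D' → C}
    {e : D → D'} (h : g' ∘ e = g) : FullHom (R.comap g) (R.comap g') e := by
  subst h
  exact fun _ _ => Iff.rfl

theorem FullHom.comp_s7 {A B C : Type} {RA : RelStr ar A} {RB : RelStr ar B} {RC : RelStr ar C}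
    {g : A → B} {f : B → C} (hg : FullHom RA RB g) (hf : FullHom RB RC f) :
    FullHom RA RC (f ∘ g) :=
  fun s t => (hg s t).trans (hf s (g ∘ t))

theorem FullHom.interchangeable_of_apply_eq {A B : Type} {RA : RelStr ar A} {RB : RelStr ar B}
    {f : A → B} (hf : FullHom RA RB f) {a b : A} (hab : f a = f b) : Interchangeable RA a b := by
  intro s t i
  rw [hf, hf, Function.comp_update, Function.comp_update, hab]

def interchangeableSetoid {A : Type} (R : RelStr ar A) : Setoid A where
  r := Interchangeable R
  iseqv :=
    { refl := fun _ _ _ _ => Iff.rfl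
      symm := fun h s t i => (h s t i).symm
      trans := fun h h' s t i => (h s t i).trans (h' s t i) }

theorem rel_iff_of_forall_interchangeable {A : Type} {R : RelStr ar A} {s : σ}
    {t t' : Fin (ar s) → A} (h : ∀ i, Interchangeable R (t i) (t' i)) : R s t ↔ R s t' := by
  classical
  have partial_swap : ∀ u : Finset (Fin (ar s)),
      R s t ↔ R s (fun i => if i ∈ u then t' i else t i) := by
    intro u
    induction u using Finset.induction_on with
    | empty => simp
    | insert a u ha ih =>
      set w : Fin (ar s) → A := fun i => if i ∈ u then t' i else t i
      have hw : Function.update w a (t a) = w := by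
        funext i
        by_cases hi : i = a <;> simp [w, hi, ha]
      have hw' : Function.update w a (t' a) = fun i => if i ∈ insert a u then t' i else t i := by
        funext i
        by_cases hi : i = a <;> simp [w, hi]
      rw [ih, ← hw', ← hw, Function.update_idem]
      exact h a s w a
  simpa using partial_swap Finset.univ

theorem exists_fullHom_comap_of_forall_interchangeable {D C : Type} {R : RelStr ar C}
    (g : D → C) (hg : ∀ c, ∃ d, Interchangeable R c (g d)) :
    ∃ φ : C → D, FullHom R (R.comap g) φ := by
  choose φ hφ using hg
  exact ⟨φ, fun _ _ => rel_iff_of_forall_interchangeable fun i => hφ _⟩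

theorem exists_comap_not_fullHom_of_pairwise_not_interchangeable {C : Type} {R : RelStr ar C}
    {k r : ℕ} (hr : ∀ s, ar s ≤ r) (v : Fin k → C)
    (hv : Pairwise fun i j => ¬ Interchangeable R (v i) (v j)) :
    ∃ n ≤ k + k * k * r, ∃ g : Fin n → C, ∀ (B : Type) [Fintype B] (RB : RelStr ar B)
      (f : Fin n → B), Fintype.card B < k → ¬ FullHom (R.comap g) RB f := by
  classical
  have hwit : ∀ q : {q : Fin k × Fin k // q.1 ≠ q.2}, ∃ (s : σ) (t : Fin (ar s) → C)
      (i : Fin (ar s)), ¬ (R s (Function.update t i (v q.1.1)) ↔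
        R s (Function.update t i (v q.1.2))) := by
    intro q
    simpa [Interchangeable] using hv q.2
  choose s t pos hst using hwit
  let D := Fin k ⊕ Σ q, Fin (ar (s q))
  let g : D → C := Sum.elim v fun x => t x.1 x.2
  have hcard : Fintype.card D ≤ k + k * k * r := by
    simp only [D, Fintype.card_sum, Fintype.card_fin, Fintype.card_sigma]
    gcongr
    calc ∑ q, ar (s q) ≤ Fintype.card {q : Fin k × Fin k // q.1 ≠ q.2} * r :=
          Finset.sum_le_card_nsmul _ _ _ fun q _ => hr (s q)
      _ ≤ k * k * r := by
          gcongr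
          exact (Fintype.card_subtype_le _).trans (by simp)
  let e := Fintype.equivFin D
  refine ⟨_, hcard, g ∘ e.symm, fun B _ RB f hB hf => ?_⟩
  have hge : (g ∘ e.symm) ∘ e = g := by funext x; simp
  have hfD := (fullHom_comap_of_comp_eq (R := R) hge).comp_s7 hf
  obtain ⟨i, j, hij, hfij⟩ :=
    Fintype.exists_ne_map_eq_of_card_lt (f ∘ e ∘ Sum.inl) (by simpa using hB)
  let q : {q : Fin k × Fin k // q.1 ≠ q.2} := ⟨(i, j), hij⟩
  have := hfD.interchangeable_of_apply_eq hfij (s q) (fun l => Sum.inr ⟨q, l⟩) (pos q)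
  simp only [RelStr.comap, Function.comp_update] at this
  exact hst q this

theorem exists_small_comap_not_fullHom {C : Type} [Fintype C] (R : RelStr ar C) {ι : Type}
    {bsz : ι → ℕ} (BR : ∀ b, RelStr ar (Fin (bsz b))) {N r : ℕ} (hN : ∀ b, bsz b ≤ N)
    (hr : ∀ s, ar s ≤ r) (hC : ¬ ∃ (b : ι) (f : C → Fin (bsz b)), FullHom R (BR b) f) :
    ∃ n ≤ N + 1 + (N + 1) * (N + 1) * r, ∃ g : Fin n → C,
      ¬ ∃ (b : ι) (f : Fin n → Fin (bsz b)), FullHom (R.comap g) (BR b) f := by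
  classical
  let Q := Quotient (interchangeableSetoid R)
  by_cases hQ : Fintype.card Q ≤ N
  · let e := Fintype.equivFin Q
    refine ⟨_, by omega, Quotient.out ∘ e.symm, ?_⟩
    rintro ⟨b, f, hf⟩
    have hout (c : C) : Interchangeable R c (Quotient.mk (interchangeableSetoid R) c).out :=
      (interchangeableSetoid R).symm' (Quotient.mk_out c)
    obtain ⟨φ, hφ⟩ := exists_fullHom_comap_of_forall_interchangeable (R := R)
      (Quotient.out ∘ e.symm) fun c => ⟨e (Quotient.mk _ c), by simpa using hout c⟩
    exact hC ⟨b, f ∘ φ, hφ.comp_s7 hf⟩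
  · obtain ⟨emb⟩ : Nonempty (Fin (N + 1) ↪ Q) :=
      Function.Embedding.nonempty_of_card_le (by simpa using hQ)
    have hv : Pairwise fun i j => ¬ Interchangeable R (emb i).out (emb j).out := by
      intro i j hij hint
      apply hij
      apply emb.injective
      simpa using Quotient.sound (s := interchangeableSetoid R) hint
    obtain ⟨n, hn, g, hg⟩ := exists_comap_not_fullHom_of_pairwise_not_interchangeable hr _ hv
    exact ⟨n, hn, g, fun ⟨b, f, hf⟩ => hg _ _ f (by simpa using Nat.lt_succ_of_le (hN b)) hf⟩

end

/-- For every finite set `𝓑` of finite relational structures over a finite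
signature, there exists a finite set `𝓐` of finite structures such that a finite
structure `C` admits a full homomorphism to some member of `𝓑` if and only if no member
of `𝓐` admits a full homomorphism into `C`. -/
theorem stmt_7 {σ : Type} {ar : σ → ℕ} [Fintype σ] (p : ℕ) (bsz : Fin p → ℕ)
    (BR : ∀ b : Fin p, ∀ s : σ, (Fin (ar s) → Fin (bsz b)) → Prop) :
    ∃ (q : ℕ) (asz : Fin q → ℕ)
      (AR : ∀ a : Fin q, ∀ s : σ, (Fin (ar s) → Fin (asz a)) → Prop),
      ∀ (Ct : Type), Fintype Ct → ∀ (RC : ∀ s : σ, (Fin (ar s) → Ct) → Prop),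
        ((∃ (b : Fin p) (f : Ct → Fin (bsz b)), FullHom RC (BR b) f) ↔
          ∀ a : Fin q, ¬ ∃ g : Fin (asz a) → Ct, FullHom (AR a) RC g) := by
  classical
  obtain ⟨N, hN⟩ : ∃ N, ∀ b, bsz b ≤ N := ⟨_, fun b => Finset.le_sup (Finset.mem_univ b)⟩
  obtain ⟨r, hr⟩ : ∃ r, ∀ s, ar s ≤ r := ⟨_, fun s => Finset.le_sup (Finset.mem_univ s)⟩
  let Obstruction := {A : Σ m : Fin (N + 1 + (N + 1) * (N + 1) * r + 1), RelStr ar (Fin m) //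
    ¬ ∃ (b : Fin p) (f : Fin A.1 → Fin (bsz b)), FullHom A.2 (BR b) f}
  let e := (Fintype.equivFin Obstruction).symm
  refine ⟨_, fun a => (e a).1.1, fun a => (e a).1.2, fun Ct _ RC => ⟨?_, fun hA => ?_⟩⟩
  · rintro ⟨b, f, hf⟩ a ⟨g, hg⟩
    exact (e a).2 ⟨b, f ∘ g, hg.comp_s7 hf⟩
  · by_contra hC
    obtain ⟨n, hn, g, hg⟩ := exists_small_comap_not_fullHom RC BR hN hr hC
    apply hA (e.symm ⟨⟨⟨n, by omega⟩, RelStr.comap g RC⟩, hg⟩)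
    beta_reduce
    rw [e.apply_symm_apply]
    exact ⟨g, fullHom_comap g RC⟩
end

section
/- Let A be a finite structure, B any structure, and let PDdiam_A be the point-determining diagram of A (obtained from the diagram of A by replacing each inequality conjunct x_a ≠ x_b by the not-twins formula NT(x_a, x_b)). Then the following are equivalent: (1) B satisfies the existential closure of PDdiam_A; (2) the point-determining quotient B_0 of B satisfies the existential closure of PDdiam_A; (3) A embeds into B_0. -/
/-- The relational first-order language associated with a signature. -/
def Lang (σ : Type) (ar : σ → ℕ) : FirstOrder.Language :=
  { Functions := fun _ => Empty, Relations := fun n => { s : σ // ar s = n } }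

/-- The `Lang σ ar`-structure on `A` determined by an interpretation of the relation
symbols. -/
def mkStruct {σ : Type} {ar : σ → ℕ} {A : Type}
    (R : ∀ s : σ, (Fin (ar s) → A) → Prop) : (Lang σ ar).Structure A where
  funMap := fun f => f.elim
  RelMap := fun r t => R r.1 fun i => t (Fin.cast r.2 i)

/-- Satisfaction of a sentence in the structure `(A, RA)`. -/
def SatSen {σ : Type} {ar : σ → ℕ} (A : Type)
    (RA : ∀ s : σ, (Fin (ar s) → A) → Prop) (φ : (Lang σ ar).Sentence) : Prop :=
  letI := mkStruct RA
  FirstOrder.Language.Sentence.Realize A φ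

/-- Realization of a first-order formula in the structure `(A, RA)` under an
assignment of the free variables. -/
def RealizeFml {σ : Type} {ar : σ → ℕ} {α : Type} (A : Type)
    (RA : ∀ s : σ, (Fin (ar s) → A) → Prop) (φ : (Lang σ ar).Formula α) (v : α → A) : Prop :=
  letI := mkStruct RA
  FirstOrder.Language.Formula.Realize φ v

/-- A universal sentence: the universal closure of a quantifier-free formula. -/
def IsUniversalSen {σ : Type} {ar : σ → ℕ} (φ : (Lang σ ar).Sentence) : Prop :=
  ∃ (k : ℕ) (ψ : (Lang σ ar).BoundedFormula Empty k), ψ.IsQF ∧ φ = ψ.alls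

/-- Let `A` be a finite structure, `B` a finite structure with
point-determining quotient `B₀` (the full surjective image of `B` identifying exactly
the twins), and let `π` be the point-determining diagram of `A`: the formula obtained
from the diagram of `A` by replacing inequalities by the not-twins formula, i.e. an
assignment `v` realizes `π` exactly if it preserves all relations and non-relations of
`A` and sends distinct elements to non-interchangeable elements. Then the following are
equivalent: (1) `B` satisfies the existential closure of `π`; (2) `B₀` satisfies the
existential closure of `π`; (3) `A` embeds into `B₀`. -/
theorem stmt_11 {σ : Type} {ar : σ → ℕ} (A : Type) [Fintype A]
    (RA : ∀ s : σ, (Fin (ar s) → A) → Prop)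
    (B : Type) [Fintype B] (RB : ∀ s : σ, (Fin (ar s) → B) → Prop)
    (B0 : Type) (RB0 : ∀ s : σ, (Fin (ar s) → B0) → Prop)
    (q : B → B0) (hsurj : Function.Surjective q) (hfull : FullHom RB RB0 q)
    (hfib : ∀ b b' : B, q b = q b' ↔ (b = b' ∨ Twins RB b b'))
    (hpd : PointDetermining RB0)
    (π : (Lang σ ar).Formula A)
    (hπ : ∀ (C : Type) (RC : ∀ s : σ, (Fin (ar s) → C) → Prop) (v : A → C),
      RealizeFml C RC π v ↔
        ((∀ (s : σ) (t : Fin (ar s) → A), RA s t ↔ RC s (v ∘ t)) ∧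
          ∀ a a' : A, a ≠ a' → ¬ Interchangeable RC (v a) (v a'))) :
    ((∃ v : A → B, RealizeFml B RB π v) ↔ (∃ v : A → B0, RealizeFml B0 RB0 π v)) ∧
    ((∃ v : A → B0, RealizeFml B0 RB0 π v) ↔ Embeds RA RB0) := by
  constructor
  · -- (1) ↔ (2)
    have key : ∀ x y : B, Interchangeable RB x y ↔ Interchangeable RB0 (q x) (q y) := by
      intro x y
      constructor
      · intro h s t0 i
        obtain ⟨t, ht⟩ : ∃ t : Fin (ar s) → B, q ∘ t = t0 := by
          refine ⟨fun j => (hsurj (t0 j)).choose, ?_⟩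
          funext j; exact (hsurj (t0 j)).choose_spec
        have hx : q ∘ Function.update t i x = Function.update t0 i (q x) := by
          rw [← ht]; exact Function.comp_update q t i x
        have hy : q ∘ Function.update t i y = Function.update t0 i (q y) := by
          rw [← ht]; exact Function.comp_update q t i y
        rw [← hx, ← hy, ← hfull, ← hfull]
        exact h s t i
      · intro h s t i
        have hx : q ∘ Function.update t i x = Function.update (q ∘ t) i (q x) :=
          Function.comp_update q t i x
        have hy : q ∘ Function.update t i y = Function.update (q ∘ t) i (q y) :=
          Function.comp_update q t i y
        rw [hfull, hfull, hx, hy]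
        exact h s (q ∘ t) i
    constructor
    · rintro ⟨v, hv⟩
      rw [hπ] at hv
      refine ⟨q ∘ v, (hπ _ _ _).2 ⟨?_, ?_⟩⟩
      · intro s t
        rw [hv.1 s t, hfull]
        rfl
      · intro a a' haa hint
        exact hv.2 a a' haa ((key (v a) (v a')).2 hint)
    · rintro ⟨v0, hv0⟩
      rw [hπ] at hv0
      choose v hvq using fun a => hsurj (v0 a)
      refine ⟨v, (hπ _ _ _).2 ⟨?_, ?_⟩⟩
      · intro s t
        have heq : v0 ∘ t = q ∘ v ∘ t := by funext j; simp [hvq, Function.comp]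
        rw [hv0.1 s t, heq, ← hfull]
      · intro a a' haa hint
        have := (key (v a) (v a')).1 hint
        rw [hvq, hvq] at this
        exact hv0.2 a a' haa this
  · -- (2) ↔ (3)
    constructor
    · rintro ⟨v, hv⟩
      rw [hπ] at hv
      refine ⟨v, ?_, hv.1⟩
      intro a a' h
      by_contra hne
      exact hv.2 a a' hne (h ▸ fun s t i => Iff.rfl)
    · rintro ⟨e, hinj, hfullE⟩
      refine ⟨e, (hπ _ _ _).2 ⟨hfullE, ?_⟩⟩
      intro a a' haa hint
      exact hpd (e a) (e a') ⟨fun h => haa (hinj h), hint⟩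
end
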